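/- arXiv:2109.09925 — 2 statements merged into one kernel-verified Lean document; each statement's English description precedes it below -/
import Mathlib

section
/- If A is a collection of even-sized subsets of an n-element set such that every pair of sets in A (including a set with itself, which is automatic) has even-sized intersection, then |A| ≤ 2^⌊n/2⌋. -/
/-!
Identify a set with its indicator vector in `𝔽₂ⁿ`; the dot product of two indicator vectors is
the parity of the intersection. The family therefore spans a self-orthogonal subspace for the
nondegenerate dot product, and such a subspace has dimension at most `n / 2` because
`dim W + dim W^⊥ = n`. A subspace of dimension `d` over `𝔽₂` has `2 ^ d` elements.
-/

open Module LinearMap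

namespace LinearMap.BilinForm

theorem span_le_orthogonal_span {R M : Type*} [CommRing R] [AddCommGroup M] [Module R M]
    {B : LinearMap.BilinForm R M} {S : Set M} (hS : ∀ x ∈ S, ∀ y ∈ S, B x y = 0) :
    Submodule.span R S ≤ B.orthogonal (Submodule.span R S) := by
  refine Submodule.span_le.2 fun x hx => mem_orthogonal_iff.2 fun y hy => ?_
  have hker : Submodule.span R S ≤ ker (B.flip x) :=
    Submodule.span_le.2 fun z hz => hS z hz x hx
  exact hker hy

theorem finrank_le_half_of_le_orthogonal {K V : Type*} [Field K] [AddCommGroup V] [Module K V]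
    [FiniteDimensional K V] {B : LinearMap.BilinForm K V} (hB : B.Nondegenerate)
    {W : Submodule K V} (hW : W ≤ B.orthogonal W) : finrank K W ≤ finrank K V / 2 := by
  have hle := Submodule.finrank_mono hW
  rw [finrank_orthogonal hB] at hle
  have := Submodule.finrank_le W
  omega

end LinearMap.BilinForm

theorem nondegenerate_dotProductEquiv (R ι : Type*) [CommSemiring R] [Fintype ι]
    [DecidableEq ι] :
    BilinForm.Nondegenerate (dotProductEquiv R ι : LinearMap.BilinForm R (ι → R)) := by
  have hsep : ∀ v : ι → R, (∀ w, v ⬝ᵥ w = 0) → v = 0 := fun v hv =>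
    (dotProductEquiv R ι).map_eq_zero_iff.1 (LinearMap.ext hv)
  exact ⟨hsep, fun w hw => hsep w fun v => dotProduct_comm w v ▸ hw v⟩

theorem Finset.card_le_pow_finrank_span {K V : Type*} [Field K] [Fintype K] [AddCommGroup V]
    [Module K V] (S : Finset V) :
    S.card ≤ Fintype.card K ^ finrank K (Submodule.span K (S : Set V)) := by
  have : Finite (Submodule.span K (S : Set V)) := Module.finite_of_finite K
  rw [← Nat.card_eq_fintype_card, ← natCard_eq_pow_finrank, ← Set.ncard_coe_finset,
    ← SetLike.coe_sort_coe, Nat.card_coe_set_eq]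
  exact Set.ncard_le_ncard Submodule.subset_span (Set.toFinite _)

theorem Finset.indicator_one_dotProduct_indicator_one {R α : Type*} [NonAssocSemiring R]
    [Fintype α] [DecidableEq α] (A B : Finset α) :
    (A : Set α).indicator 1 ⬝ᵥ (B : Set α).indicator (1 : α → R) = (A ∩ B).card := by
  simp [dotProduct, Set.indicator_apply, Finset.inter_comm]

theorem eventown_general (n : ℕ) (𝒜 : Finset (Finset (Fin n)))
    (hint : ∀ A ∈ 𝒜, ∀ B ∈ 𝒜, Even ((A ∩ B).card)) :
    𝒜.card ≤ 2 ^ (n / 2) := by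
  set S : Finset (Fin n → ZMod 2) :=
    𝒜.image fun A : Finset (Fin n) => (A : Set (Fin n)).indicator 1
  have hcard : S.card = 𝒜.card := Finset.card_image_of_injective _ fun A B h =>
    Finset.coe_injective (Set.indicator_one_inj (ZMod 2) h)
  have hS : ∀ x ∈ S, ∀ y ∈ S,
      (dotProductEquiv (ZMod 2) (Fin n) : LinearMap.BilinForm (ZMod 2) _) x y = 0 := by
    simp only [S, Finset.mem_image]
    rintro _ ⟨A, hA, rfl⟩ _ ⟨B, hB, rfl⟩
    rw [LinearEquiv.coe_coe, dotProductEquiv_apply_apply,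
      Finset.indicator_one_dotProduct_indicator_one, ZMod.natCast_eq_zero_iff_even]
    exact hint A hA B hB
  have hdim := BilinForm.finrank_le_half_of_le_orthogonal
    (nondegenerate_dotProductEquiv (ZMod 2) (Fin n)) (BilinForm.span_le_orthogonal_span hS)
  calc 𝒜.card = S.card := hcard.symm
    _ ≤ 2 ^ finrank (ZMod 2) (Submodule.span (ZMod 2) (S : Set (Fin n → ZMod 2))) := by
      simpa using S.card_le_pow_finrank_span (K := ZMod 2)
    _ ≤ 2 ^ (n / 2) := Nat.pow_le_pow_right two_pos (by simpa using hdim)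

/-- Eventown theorem: a family of even-sized subsets of an `n`-element set with
all pairwise intersections of even size has at most `2^⌊n/2⌋` members. -/
theorem eventown (n : ℕ) (𝒜 : Finset (Finset (Fin n)))
    (heven : ∀ A ∈ 𝒜, Even A.card)
    (hint : ∀ A ∈ 𝒜, ∀ B ∈ 𝒜, Even ((A ∩ B).card)) :
    𝒜.card ≤ 2 ^ (n / 2) :=
  eventown_general n 𝒜 hint
end

section
/- There is no collection A of n+1 odd-sized subsets of [n] such that exactly one unordered pair of distinct sets from A has odd-sized intersection. -/
/-!
Over `𝔽₂`, the `n + 1` indicator vectors of the sets live in an `n`-dimensional space, so some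
nonempty subfamily `S` covers every point an even number of times. For `A ∈ S` this makes
`∑_{B ∈ S} |A ∩ B|` even, while the term `|A ∩ A|` is odd: every member of `S` lies in an odd pair
inside `S`. With a single odd pair `{A, B}` this forces `S = {A, B}`, so `A` and `B` have the same
indicator vector, i.e. `A = B`.
-/

open Finset Matrix

theorem ZMod.exists_subset_nonempty_sum_eq_zero_of_finrank_lt_card {ι V : Type*}
    [AddCommGroup V] [Module (ZMod 2) V] [Module.Finite (ZMod 2) V]
    (s : Finset ι) (v : ι → V) (h : Module.finrank (ZMod 2) V < #s) :
    ∃ t ⊆ s, t.Nonempty ∧ ∑ i ∈ t, v i = 0 := by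
  have hdep : ¬ LinearIndepOn (ZMod 2) v s := fun hli =>
    h.not_ge (by simpa using hli.fintype_card_le_finrank)
  obtain ⟨f, hf, i, hi, hfi⟩ := not_linearIndepOn_finset_iff.1 hdep
  refine ⟨s.filter (f · ≠ 0), filter_subset _ _, ⟨i, mem_filter.2 ⟨hi, hfi⟩⟩, ?_⟩
  rw [sum_filter]
  refine (sum_congr rfl fun j _ => ?_).trans hf
  by_cases hj : f j = 0
  · simp [hj]
  · rw [if_pos hj, (by decide : ∀ c : ZMod 2, c ≠ 0 → c = 1) _ hj, one_smul]

section Indicator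

variable {α : Type*} [DecidableEq α]

def indicatorVec (A : Finset α) : α → ZMod 2 := fun i => if i ∈ A then 1 else 0

theorem indicatorVec_injective : Function.Injective (indicatorVec : Finset α → α → ZMod 2) := by
  intro A B h
  ext i
  have hi := congrFun h i
  simp only [indicatorVec] at hi
  split_ifs at hi <;> simp_all

variable [Fintype α]

theorem indicatorVec_dotProduct (A B : Finset α) :
    indicatorVec A ⬝ᵥ indicatorVec B = #(A ∩ B) := by
  simp [dotProduct, indicatorVec, inter_comm]

theorem exists_odd_card_inter_of_sum_indicatorVec_eq_zero {S : Finset (Finset α)}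
    (hS : ∑ B ∈ S, indicatorVec B = 0) {A : Finset α} (hA : A ∈ S) (hodd : Odd #A) :
    ∃ B ∈ S, B ≠ A ∧ Odd #(A ∩ B) := by
  have hsum : ∑ B ∈ S, (#(B ∩ A) : ZMod 2) = 0 := by
    simp_rw [← indicatorVec_dotProduct, ← sum_dotProduct, hS, zero_dotProduct]
  rw [← add_sum_erase S _ hA, inter_self, ZMod.natCast_eq_one_iff_odd.2 hodd] at hsum
  have hrest : ∑ B ∈ S.erase A, (#(B ∩ A) : ZMod 2) ≠ 0 := by
    intro h
    rw [h, add_zero] at hsum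
    exact one_ne_zero hsum
  obtain ⟨B, hB, hBA⟩ := exists_ne_zero_of_sum_ne_zero hrest
  exact ⟨B, mem_of_mem_erase hB, ne_of_mem_erase hB,
    inter_comm A B ▸ ZMod.natCast_ne_zero_iff_odd.1 hBA⟩

end Indicator

section OddPairs

variable {α : Type*} [DecidableEq α]

def oddPairs (𝒜 : Finset (Finset α)) : Finset (Finset α × Finset α) :=
  𝒜.offDiag.filter fun p => Odd #(p.1 ∩ p.2)

theorem mem_oddPairs {𝒜 : Finset (Finset α)} {A B : Finset α} :
    (A, B) ∈ oddPairs 𝒜 ↔ A ∈ 𝒜 ∧ B ∈ 𝒜 ∧ A ≠ B ∧ Odd #(A ∩ B) := by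
  simp [oddPairs, and_assoc]

theorem eq_or_eq_of_card_oddPairs_eq_two {𝒜 : Finset (Finset α)} (h : #(oddPairs 𝒜) = 2)
    {A B C D : Finset α} (hAB : (A, B) ∈ oddPairs 𝒜) (hCD : (C, D) ∈ oddPairs 𝒜) :
    C = A ∨ C = B := by
  obtain ⟨hA, hB, hne, hodd⟩ := mem_oddPairs.1 hAB
  have hBA : (B, A) ∈ oddPairs 𝒜 := mem_oddPairs.2 ⟨hB, hA, hne.symm, inter_comm A B ▸ hodd⟩
  have hpair : oddPairs 𝒜 = {(A, B), (B, A)} := by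
    refine (eq_of_subset_of_card_le (insert_subset hAB (singleton_subset_iff.2 hBA)) ?_).symm
    rw [h, card_pair (by simp [hne])]
  simp only [hpair, mem_insert, mem_singleton, Prod.mk.injEq] at hCD
  exact hCD.imp And.left And.left

end OddPairs

/-- `offDiag` counts each unordered pair twice, hence the `2`. -/
theorem no_exactly_one_odd_pair (n : ℕ) :
    ¬ ∃ 𝒜 : Finset (Finset (Fin n)),
      𝒜.card = n + 1 ∧ (∀ A ∈ 𝒜, Odd A.card) ∧
      (𝒜.offDiag.filter fun p => Odd ((p.1 ∩ p.2).card)).card = 2 := by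
  rintro ⟨𝒜, hcard, hodd, hpairs⟩
  obtain ⟨S, hS𝒜, ⟨A, hA⟩, hS⟩ :=
    ZMod.exists_subset_nonempty_sum_eq_zero_of_finrank_lt_card 𝒜 indicatorVec
      (by simp [hcard])
  have partner := fun C (hC : C ∈ S) =>
    exists_odd_card_inter_of_sum_indicatorVec_eq_zero hS hC (hodd C (hS𝒜 hC))
  have mem_pairs {C D} (hC : C ∈ S) (hD : D ∈ S) (hne : D ≠ C) (hCD : Odd #(C ∩ D)) :
      (C, D) ∈ oddPairs 𝒜 :=
    mem_oddPairs.2 ⟨hS𝒜 hC, hS𝒜 hD, hne.symm, hCD⟩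
  obtain ⟨B, hB, hBA, hAB⟩ := partner A hA
  have hSAB : S = {A, B} := by
    refine subset_antisymm (fun C hC => ?_) (insert_subset hA (singleton_subset_iff.2 hB))
    obtain ⟨D, hD, hDC, hCD⟩ := partner C hC
    simpa using eq_or_eq_of_card_oddPairs_eq_two hpairs (mem_pairs hA hB hBA hAB)
      (mem_pairs hC hD hDC hCD)
  rw [hSAB, sum_pair hBA.symm] at hS
  exact hBA <| Eq.symm <| indicatorVec_injective <|
    funext fun i => CharTwo.add_eq_zero.1 (congrFun hS i)
end
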